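/- arXiv:1405.6356 — 2 statements merged into one kernel-verified Lean document; each statement's English description precedes it below -/
import Mathlib

section
/- Let G be a countable nondiscrete Boolean topological group containing a decreasing family of open subgroups G_i, i ∈ ω, with ⋂_i G_i = {0}. Then there exists a continuous group isomorphism φ : G → ⊕_ω Z/2Z, where ⊕_ω Z/2Z carries the topology inherited from the product topology on ∏_ω Z/2Z. -/
/-!
View `G` as an `𝔽₂`-vector space filtered by the `G i`. It suffices to find a basis `B` adapted
to the filtration, i.e. with `span (B ∩ G i) = G i` for all `i`: the coordinate along `b ∈ B`
then vanishes on the open subgroup `G i` for any `i` with `b ∉ G i`, so it is continuous; and `B`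
is countably infinite, since `G` is countable and, being nondiscrete, infinite.

Such a basis is built greedily along an enumeration of `G`. To absorb a vector `v` not spanned by
the finite adapted set `T` built so far, add an element `w` of the coset `v + span T` of maximal
depth, i.e. lying in the longest initial segment of the `G i` (depths are bounded on the coset
because the traces of the `G i` on the finite-dimensional `span (insert v T)` stabilize,
necessarily at `0`). If `a • w + z ∈ G i` with `a ≠ 0` and `z ∈ span T`, then `w + a⁻¹ • z` lies in
the coset and in `G i`, so by maximality `w ∈ G i`; this keeps `insert w T` adapted.
-/

/-- The product topology on ⊕_ω ℤ/2ℤ, inherited from ∏_ω ℤ/2ℤ with ℤ/2ℤ discrete. -/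
def prodTop : TopologicalSpace (ℕ →₀ ZMod 2) :=
  TopologicalSpace.induced (fun x => (x : ℕ → ZMod 2))
    (@Pi.topologicalSpace ℕ (fun _ => ZMod 2) (fun _ => ⊥))

open Submodule Set

section AdaptedBasis

variable {K V : Type*} [DivisionRing K] [AddCommGroup V] [Module K V] {S : ℕ → Submodule K V}

/-- Junk value `0` when `v` lies in every `S i`, e.g. for `v = 0`. -/
noncomputable def filtrationDepth (S : ℕ → Submodule K V) (v : V) : ℕ := by
  classical exact if h : ∃ i, v ∉ S i then Nat.find h else 0

lemma exists_notMem_of_iInf_eq_bot (hint : ⨅ i, S i = ⊥) {v : V} (hv : v ≠ 0) :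
    ∃ i, v ∉ S i := by
  by_contra! h
  exact hv <| (mem_bot K).1 <| hint ▸ (mem_iInf S).2 h

lemma mem_iff_lt_filtrationDepth (hS : Antitone S) (hint : ⨅ i, S i = ⊥) {v : V} (hv : v ≠ 0)
    (i : ℕ) : v ∈ S i ↔ i < filtrationDepth S v := by
  classical
  rw [filtrationDepth, dif_pos (exists_notMem_of_iInf_eq_bot hint hv), Nat.lt_find_iff]
  exact ⟨fun h j hj => not_not.2 (hS hj h), fun h => not_not.1 (h i le_rfl)⟩

lemma bddAbove_filtrationDepth_image (hS : Antitone S) (hint : ⨅ i, S i = ⊥) {W : Submodule K V}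
    (hW : W.FG) : BddAbove (filtrationDepth S '' W) := by
  have : Module.Finite K W := Module.Finite.iff_fg.2 hW
  let traces : ℕ →o (Submodule K W)ᵒᵈ :=
    ⟨fun i => OrderDual.toDual ((S i).comap W.subtype), fun i j hij => comap_mono (hS hij)⟩
  obtain ⟨n, hn⟩ := IsArtinian.monotone_stabilizes traces
  refine ⟨n, ?_⟩
  rintro _ ⟨w, hwW, rfl⟩
  by_cases hw : w = 0
  · simp [hw, filtrationDepth]
  have hwn : w ∉ S n := by
    intro hwn
    refine (exists_notMem_of_iInf_eq_bot hint hw).elim fun m hwm => hwm ?_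
    rcases le_total m n with hmn | hnm
    · exact hS hmn hwn
    · have hcomap : (S n).comap W.subtype = (S m).comap W.subtype :=
        congrArg OrderDual.ofDual (hn m hnm)
      exact (SetLike.ext_iff.1 hcomap ⟨w, hwW⟩).1 hwn
  exact not_lt.1 fun h => hwn ((mem_iff_lt_filtrationDepth hS hint hw n).2 h)

def IsAdapted (S : ℕ → Submodule K V) (T : Set V) : Prop :=
  ∀ i, span K T ⊓ S i ≤ span K (T ∩ S i)

lemma exists_forall_filtrationDepth_add_le (hS : Antitone S) (hint : ⨅ i, S i = ⊥) {T : Set V}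
    (hT : T.Finite) (v : V) :
    ∃ t ∈ span K T, ∀ u ∈ span K T, filtrationDepth S (v + u) ≤ filtrationDepth S (v + t) := by
  set coset : Set V := (v + ·) '' (span K T : Set V)
  have hcoset : coset ⊆ span K (insert v T) := by
    rintro _ ⟨t, ht, rfl⟩
    exact add_mem (subset_span (mem_insert v T)) (span_mono (subset_insert v T) ht)
  have hne : (filtrationDepth S '' coset).Nonempty := ⟨_, v, ⟨0, zero_mem _, add_zero v⟩, rfl⟩
  have hbdd : BddAbove (filtrationDepth S '' coset) :=
    (bddAbove_filtrationDepth_image hS hint (fg_span (hT.insert v))).mono (image_mono hcoset)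
  obtain ⟨w, ⟨t, ht, rfl⟩, hw⟩ := Nat.sSup_mem hne hbdd
  exact ⟨t, ht, fun u hu => hw ▸ le_csSup hbdd (mem_image_of_mem _ (mem_image_of_mem _ hu))⟩

lemma exists_isAdapted_insert (hS : Antitone S) (hint : ⨅ i, S i = ⊥) {T : Set V}
    (hT : T.Finite) (hTS : IsAdapted S T) {v : V} (hv : v ∉ span K T) :
    ∃ w, w ∉ span K T ∧ v ∈ span K (insert w T) ∧ IsAdapted S (insert w T) := by
  obtain ⟨t, ht, hmax⟩ := exists_forall_filtrationDepth_add_le hS hint hT v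
  have hvt : v + t ∉ span K T := fun h => hv (by simpa using sub_mem h ht)
  refine ⟨v + t, hvt, ?_, fun i => ?_⟩
  · simpa using sub_mem (subset_span (mem_insert (v + t) T)) (span_mono (subset_insert _ T) ht)
  rintro x ⟨hx, hxS⟩
  obtain ⟨a, z, hz, rfl⟩ := mem_span_insert.1 hx
  have hTi : span K (T ∩ S i) ≤ span K (insert (v + t) T ∩ S i) :=
    span_mono (inter_subset_inter_left _ (subset_insert _ T))
  by_cases ha : a = 0
  · subst ha
    rw [zero_smul, zero_add] at hxS ⊢
    exact hTi (hTS i ⟨hz, hxS⟩)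
  have hu : a⁻¹ • (a • (v + t) + z) = v + (t + a⁻¹ • z) := by
    rw [smul_add, inv_smul_smul₀ ha, add_assoc]
  have huS : v + (t + a⁻¹ • z) ∈ S i := hu ▸ smul_mem _ _ hxS
  have hu0 : v + (t + a⁻¹ • z) ≠ 0 := by
    rw [← hu, smul_ne_zero_iff_right (inv_ne_zero ha)]
    intro h0
    refine hvt ((smul_mem_iff _ ha).1 ?_)
    rw [eq_neg_of_add_eq_zero_left h0]
    exact neg_mem hz
  have hvtS : v + t ∈ S i := by
    have hle := hmax _ (add_mem ht (smul_mem _ a⁻¹ hz))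
    have hlt := (mem_iff_lt_filtrationDepth hS hint hu0 i).1 huS
    exact (mem_iff_lt_filtrationDepth hS hint (ne_of_mem_of_not_mem (zero_mem _) hvt).symm i).2
      (hlt.trans_le hle)
  have hzS : z ∈ S i := by simpa using sub_mem hxS (smul_mem _ a hvtS)
  exact add_mem (smul_mem _ a (subset_span ⟨mem_insert _ T, hvtS⟩)) (hTi (hTS i ⟨hz, hzS⟩))

lemma exists_isAdapted_extension (hS : Antitone S) (hint : ⨅ i, S i = ⊥) {T : Set V}
    (hT : T.Finite ∧ LinearIndepOn K id T ∧ IsAdapted S T) (v : V) :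
    ∃ T', T ⊆ T' ∧ (T'.Finite ∧ LinearIndepOn K id T' ∧ IsAdapted S T') ∧ v ∈ span K T' := by
  obtain ⟨hfin, hli, hTS⟩ := hT
  by_cases hv : v ∈ span K T
  · exact ⟨T, subset_rfl, ⟨hfin, hli, hTS⟩, hv⟩
  obtain ⟨w, hw, hvw, hwS⟩ := exists_isAdapted_insert hS hint hfin hTS hv
  exact ⟨insert w T, subset_insert w T,
    ⟨hfin.insert w, (linearIndepOn_id_insert fun h => hw (subset_span h)).2 ⟨hli, hw⟩, hwS⟩, hvw⟩

theorem exists_basis_span_range_inter_eq [Countable V] (hS : Antitone S)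
    (hint : ⨅ i, S i = ⊥) :
    ∃ (B : Set V) (b : Module.Basis B K V), ∀ i, span K (range b ∩ S i) = S i := by
  obtain ⟨f, hf⟩ := exists_surjective_nat V
  choose! extend hsub hP hmem using fun (T : Set V)
    (hT : T.Finite ∧ LinearIndepOn K id T ∧ IsAdapted S T) => exists_isAdapted_extension hS hint hT
  let chain : ℕ → Set V := fun n => Nat.rec ∅ (fun k T => extend T (f k)) n
  have hchainP : ∀ n, (chain n).Finite ∧ LinearIndepOn K id (chain n) ∧ IsAdapted S (chain n) := by
    intro n
    induction n with
    | zero => exact ⟨finite_empty, linearIndepOn_empty K id, fun i => by simp [chain]⟩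
    | succ n ih => exact hP _ ih _
  have hmono : Monotone chain := monotone_nat_of_le_succ fun n => hsub _ (hchainP n) _
  have hspan : ∀ x, ∃ n, x ∈ span K (chain n) := by
    intro x
    obtain ⟨n, rfl⟩ := hf x
    exact ⟨n + 1, hmem _ (hchainP n) _⟩
  have hli : LinearIndependent K ((↑) : (⋃ n, chain n) → V) :=
    linearIndepOn_iUnion_of_directed hmono.directed_le fun n => (hchainP n).2.1
  have htop : ⊤ ≤ span K (range ((↑) : (⋃ n, chain n) → V)) := fun x _ => by
    obtain ⟨n, hn⟩ := hspan x
    exact span_mono (Subtype.range_coe.symm ▸ subset_iUnion chain n) hn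
  refine ⟨_, Module.Basis.mk hli htop, fun i => le_antisymm (span_le.2 fun x hx => hx.2) ?_⟩
  intro x hx
  obtain ⟨n, hn⟩ := hspan x
  refine span_mono (inter_subset_inter_left _ ?_) ((hchainP n).2.2 i ⟨hn, hx⟩)
  rw [Module.Basis.coe_mk, Subtype.range_coe]
  exact subset_iUnion chain n

end AdaptedBasis

lemma Module.Basis.le_ker_coord_of_le_span_range_inter {K V ι : Type*} [DivisionRing K]
    [AddCommGroup V] [Module K V] (b : Module.Basis ι K V) {W : Submodule K V}
    (hW : W ≤ span K (range b ∩ W)) {c : ι} (hc : b c ∉ W) : W ≤ LinearMap.ker (b.coord c) := by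
  refine hW.trans (span_le.2 ?_)
  rintro _ ⟨⟨j, rfl⟩, hj⟩
  have hjc : j ≠ c := by rintro rfl; exact hc hj
  simp [hjc]

theorem continuous_of_isOpen_preimage_zero {G H F : Type*} [AddGroup G] [TopologicalSpace G]
    [IsTopologicalAddGroup G] [AddGroup H] [TopologicalSpace H] [DiscreteTopology H]
    [FunLike F G H] [AddMonoidHomClass F G H] (f : F) (hf : IsOpen (f ⁻¹' {0})) : Continuous f :=
  continuous_of_continuousAt_zero f <| by
    rw [ContinuousAt, map_zero, nhds_discrete H, Filter.tendsto_pure]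
    exact hf.mem_nhds (map_zero f)

lemma discreteTopology_of_finite_of_iInf_eq_bot {G ι : Type*} [AddGroup G] [TopologicalSpace G]
    [IsTopologicalAddGroup G] [Finite G] (U : ι → AddSubgroup G) (hU : ∀ i, IsOpen (U i : Set G))
    (h : ⨅ i, U i = ⊥) : DiscreteTopology G := by
  refine discreteTopology_of_isOpen_singleton_zero ?_
  have h0 : ({0} : Set G) = ⋂₀ range fun i => (U i : Set G) := by
    rw [sInter_range, ← AddSubgroup.coe_iInf, h, AddSubgroup.coe_bot]
  rw [h0]
  exact (toFinite _).isOpen_sInter (forall_mem_range.2 hU)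

lemma Module.Basis.continuous_coord_of_span_range_inter_eq {K V ι : Type*} [DivisionRing K]
    [TopologicalSpace K] [DiscreteTopology K] [AddCommGroup V] [Module K V] [TopologicalSpace V]
    [IsTopologicalAddGroup V] {S : ℕ → Submodule K V} (hopen : ∀ i, IsOpen (S i : Set V))
    (hint : ⨅ i, S i = ⊥) (b : Module.Basis ι K V) (hb : ∀ i, span K (range b ∩ S i) = S i)
    (c : ι) : Continuous (b.coord c) := by
  obtain ⟨i, hi⟩ := exists_notMem_of_iInf_eq_bot hint (b.ne_zero c)
  have hker : IsOpen (LinearMap.ker (b.coord c) : Set V) :=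
    AddSubgroup.isOpen_mono
      ((toAddSubgroup_le _ _).2 (b.le_ker_coord_of_le_span_range_inter (hb i).ge hi)) (hopen i)
  exact continuous_of_isOpen_preimage_zero (b.coord c) hker

/-- Lemma 2. -/
theorem stmt3 (G : Type) [AddCommGroup G] [TopologicalSpace G] [IsTopologicalAddGroup G]
    [Countable G] (hBool : ∀ x : G, x + x = 0) (hnd : ¬ DiscreteTopology G)
    (Gs : ℕ → AddSubgroup G) (hopen : ∀ i, IsOpen (Gs i : Set G)) (hdec : Antitone Gs)
    (hint : ⨅ i, Gs i = ⊥) :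
    ∃ φ : G ≃+ (ℕ →₀ ZMod 2), @Continuous G (ℕ →₀ ZMod 2) _ prodTop φ := by
  let _ : Module (ZMod 2) G := AddCommGroup.zmodModule fun x => (two_nsmul x).trans (hBool x)
  let S : ℕ → Submodule (ZMod 2) G := fun i => AddSubgroup.toZModSubmodule 2 (Gs i)
  have hS : Antitone S := (AddSubgroup.toZModSubmodule 2).monotone.comp_antitone hdec
  have hSint : ⨅ i, S i = ⊥ := by
    simp only [S, ← OrderIso.map_iInf, hint, OrderIso.map_bot]
  obtain ⟨B, b, hb⟩ := exists_basis_span_range_inter_eq hS hSint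
  have : Infinite G := not_finite_iff_infinite.1 fun _ =>
    hnd (discreteTopology_of_finite_of_iInf_eq_bot Gs hopen hint)
  have : Infinite B := not_finite_iff_infinite.1 fun _ => by
    have := Module.Finite.of_basis b
    have := Module.finite_of_finite (ZMod 2) (M := G)
    exact not_finite G
  obtain ⟨_⟩ := nonempty_denumerable B
  let e := Denumerable.eqv B
  let _ : TopologicalSpace (ZMod 2) := ⊥
  have : DiscreteTopology (ZMod 2) := ⟨rfl⟩
  refine ⟨(b.repr.trans (Finsupp.domLCongr e)).toAddEquiv,
    continuous_induced_rng.2 (continuous_pi fun n => ?_)⟩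
  convert b.continuous_coord_of_span_range_inter_eq hopen hSint hb (e.symm n) using 1
  ext x
  simp
end

section
/- Let G = ⊕_ω Z/2Z, let f : ω → ω, and let C_f = {x ≠ 0 : max supp(x) ≤ f(min supp(x))}. For c ∈ C_f set U_c = {x : min supp(x) > f(min supp(c))} ∪ {0}. Then for any distinct c, c' ∈ C_f with min supp(c) ≠ min supp(c') or c ≠ c', the translates satisfy (c + U_c) ∩ (c' + U_{c'}) = ∅ whenever c ≠ c'. -/
/-!
A point `x = c + u` of the translate `c + U_c` remembers `c`: since `u` vanishes up to
`f (min supp c)` and `c` vanishes beyond it, `x` agrees with `c` on `[0, f (min supp c)]`,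
so `min supp x = min supp c`, and `c` is the truncation of `x` at `f (min supp x)`.
Two translates sharing a point therefore come from the same `c`.
-/

noncomputable def mins (x : ℕ →₀ ZMod 2) : ℕ := sInf {n | x n ≠ 0}
noncomputable def maxs (x : ℕ →₀ ZMod 2) : ℕ := sSup {n | x n ≠ 0}

/-- U_c = {x ≠ 0 : min supp x > f (min supp c)} ∪ {0}. -/
def Uc (f : ℕ → ℕ) (c : ℕ →₀ ZMod 2) : Set (ℕ →₀ ZMod 2) :=
  {x | x ≠ 0 ∧ f (mins c) < mins x} ∪ {0}

def Cf (f : ℕ → ℕ) : Set (ℕ →₀ ZMod 2) := {x | x ≠ 0 ∧ maxs x ≤ f (mins x)}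

section Support

variable {x y : ℕ →₀ ZMod 2}

lemma mins_le_of_apply_ne_zero {n : ℕ} (h : x n ≠ 0) : mins x ≤ n := Nat.sInf_le h

lemma apply_mins_ne_zero (hx : x ≠ 0) : x (mins x) ≠ 0 := by
  obtain ⟨a, ha⟩ := Finsupp.ne_iff.mp hx
  exact Nat.sInf_mem (s := {n | x n ≠ 0}) ⟨a, ha⟩

lemma le_maxs_of_apply_ne_zero {n : ℕ} (h : x n ≠ 0) : n ≤ maxs x :=
  le_csSup (x.support.finite_toSet.bddAbove.mono fun _ hm => Finsupp.mem_support_iff.mpr hm) h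

lemma mins_eq_of_eqOn_Iic {N : ℕ} (hxy : ∀ n ≤ N, x n = y n) (hx : x ≠ 0)
    (hN : mins x ≤ N) : mins x = mins y := by
  have hy : y (mins x) ≠ 0 := hxy _ hN ▸ apply_mins_ne_zero hx
  have hle : mins y ≤ mins x := mins_le_of_apply_ne_zero hy
  have hy' : x (mins y) ≠ 0 :=
    (hxy _ (hle.trans hN)).symm ▸ apply_mins_ne_zero fun h => hy (by simp [h])
  exact le_antisymm (mins_le_of_apply_ne_zero hy') hle

end Support

section Translates

variable {f : ℕ → ℕ} {c u : ℕ →₀ ZMod 2}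

lemma le_of_mem_Cf (hc : c ∈ Cf f) {n : ℕ} (hn : c n ≠ 0) : n ≤ f (mins c) :=
  (le_maxs_of_apply_ne_zero hn).trans hc.2

lemma apply_eq_zero_of_mem_Uc (hu : u ∈ Uc f c) {n : ℕ} (hn : n ≤ f (mins c)) : u n = 0 := by
  rcases hu with ⟨-, hmin⟩ | rfl
  · by_contra h
    exact absurd (mins_le_of_apply_ne_zero h) (by omega)
  · rfl

lemma mins_add_of_mem_Uc (hc : c ∈ Cf f) (hu : u ∈ Uc f c) : mins (c + u) = mins c :=
  (mins_eq_of_eqOn_Iic (N := f (mins c))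
    (fun n hn => by simp [apply_eq_zero_of_mem_Uc hu hn]) hc.1
    (le_of_mem_Cf hc (apply_mins_ne_zero hc.1))).symm

lemma apply_eq_truncation_of_mem_Uc (hc : c ∈ Cf f) (hu : u ∈ Uc f c) (n : ℕ) :
    c n = if n ≤ f (mins (c + u)) then (c + u) n else 0 := by
  rw [mins_add_of_mem_Uc hc hu]
  split_ifs with hn
  · simp [apply_eq_zero_of_mem_Uc hu hn]
  · by_contra h
    exact hn (le_of_mem_Cf hc h)

end Translates

/-- the translates c + U_c, c ∈ C_f, are pairwise disjoint. -/
theorem stmt5 (f : ℕ → ℕ) (c c' : ℕ →₀ ZMod 2)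
    (hc : c ≠ 0 ∧ maxs c ≤ f (mins c)) (hc' : c' ≠ 0 ∧ maxs c' ≤ f (mins c'))
    (hne : c ≠ c') :
    ((fun u => c + u) '' Uc f c) ∩ ((fun u => c' + u) '' Uc f c') = ∅ := by
  refine Set.eq_empty_of_forall_notMem ?_
  rintro _ ⟨⟨u, hu, rfl⟩, u', hu', heq : c' + u' = c + u⟩
  refine hne (Finsupp.ext fun n => ?_)
  rw [apply_eq_truncation_of_mem_Uc hc hu, apply_eq_truncation_of_mem_Uc hc' hu', heq]
end
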